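/- Let G be a strongly connected digraph with start vertex s and dominator tree D(s). Any two distinct vertex-resilient vertices x and y are siblings in D(s), or one is the immediate dominator (parent in D(s)) of the other. -/

import Mathlib

variable {V : Type*}

/-- Mutual reachability (strong connectivity of a pair) in the digraph `E`. -/
def SConn (E : V → V → Prop) (u v : V) : Prop :=
  Relation.ReflTransGen E u v ∧ Relation.ReflTransGen E v u

/-- The digraph obtained from `E` by deleting vertex `w` (and incident edges). -/
def delV (E : V → V → Prop) (w : V) : V → V → Prop :=
  fun a b => E a b ∧ a ≠ w ∧ b ≠ w

/-- The digraph obtained from `E` by deleting the single edge `(a,b)`. -/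
def delE (E : V → V → Prop) (a b : V) : V → V → Prop :=
  fun x y => E x y ∧ ¬(x = a ∧ y = b)

/-- `u` and `v` are vertex-resilient: they are distinct and remain strongly
connected after deletion of any single other vertex. -/
def VRes (E : V → V → Prop) (u v : V) : Prop :=
  u ≠ v ∧ ∀ w, w ≠ u → w ≠ v → SConn (delV E w) u v

/-- A vertex-resilient block: a maximal set of size ≥ 2 of pairwise
vertex-resilient vertices. -/
def IsVRBlock (E : V → V → Prop) (B : Set V) : Prop :=
  B.Pairwise (VRes E) ∧ (∃ a ∈ B, ∃ b ∈ B, a ≠ b) ∧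
    ∀ B' : Set V, B ⊆ B' → B'.Pairwise (VRes E) → B' = B

/-- `l` is (the vertex list of) a directed path from `u` to `v` in `E`. -/
def IsPathList (E : V → V → Prop) (u v : V) (l : List V) : Prop :=
  l.Chain' E ∧ l.head? = some u ∧ l.getLast? = some v

/-- The internal vertices of a path given as a vertex list. -/
def internalsL (l : List V) : List V := (l.drop 1).dropLast

/-- The edges of a path given as a vertex list. -/
def edgesOfL (l : List V) : List (V × V) := l.zip l.tail

/-- There exist two internally vertex-disjoint (simple, distinct) paths from `u` to `v`. -/
def TwoVPaths (E : V → V → Prop) (u v : V) : Prop :=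
  ∃ l₁ l₂ : List V, IsPathList E u v l₁ ∧ IsPathList E u v l₂ ∧
    l₁.Nodup ∧ l₂.Nodup ∧ l₁ ≠ l₂ ∧ ∀ x ∈ internalsL l₁, x ∉ internalsL l₂

/-- `u` and `v` are 2-vertex-connected. -/
def TwoVConn (E : V → V → Prop) (u v : V) : Prop :=
  u ≠ v ∧ TwoVPaths E u v ∧ TwoVPaths E v u

/-- There exist two edge-disjoint paths from `u` to `v`. -/
def TwoEPaths (E : V → V → Prop) (u v : V) : Prop :=
  ∃ l₁ l₂ : List V, IsPathList E u v l₁ ∧ IsPathList E u v l₂ ∧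
    ∀ e ∈ edgesOfL l₁, e ∉ edgesOfL l₂

/-- `u` and `v` are 2-edge-connected. -/
def TwoEConn (E : V → V → Prop) (u v : V) : Prop :=
  u ≠ v ∧ TwoEPaths E u v ∧ TwoEPaths E v u

/-- A 2-vertex-connected block. -/
def Is2VBlock (E : V → V → Prop) (B : Set V) : Prop :=
  B.Pairwise (TwoVConn E) ∧ (∃ a ∈ B, ∃ b ∈ B, a ≠ b) ∧
    ∀ B' : Set V, B ⊆ B' → B'.Pairwise (TwoVConn E) → B' = B

/-- A 2-edge-connected block. -/
def Is2EBlock (E : V → V → Prop) (B : Set V) : Prop :=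
  B.Pairwise (TwoEConn E) ∧ (∃ a ∈ B, ∃ b ∈ B, a ≠ b) ∧
    ∀ B' : Set V, B ⊆ B' → B'.Pairwise (TwoEConn E) → B' = B

/-- The digraph `E` is strongly connected. -/
def StronglyConn (E : V → V → Prop) : Prop :=
  ∀ u v, Relation.ReflTransGen E u v

/-- `(a,b)` is a strong bridge of the strongly connected digraph `E`. -/
def IsStrongBridge (E : V → V → Prop) (a b : V) : Prop :=
  E a b ∧ ¬ StronglyConn (delE E a b)

/-- `u` dominates `w` in the flow graph with start vertex `s`:
every path from `s` to `w` contains `u`. -/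
def DomOf (E : V → V → Prop) (s u w : V) : Prop :=
  ∀ l : List V, IsPathList E s w l → u ∈ l

/-- `d` is the immediate dominator of `w` in the flow graph with start `s`:
the proper dominator of `w` dominated by all proper dominators of `w`. -/
def IdomOf (E : V → V → Prop) (s d w : V) : Prop :=
  d ≠ w ∧ DomOf E s d w ∧ ∀ u, u ≠ w → DomOf E s u w → DomOf E s u d

/-- The block graph `F` of the digraph `E`: the bipartite undirected graph on the
vertices of `E` together with its vertex-resilient blocks, a vertex `u` being
adjacent to a block node `B` exactly when `u ∈ B`. -/
def blockGraph (E : V → V → Prop) :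
    SimpleGraph (V ⊕ {B : Set V // IsVRBlock E B}) where
  Adj a b := ∃ u B, u ∈ B.1 ∧
    ((a = Sum.inl u ∧ b = Sum.inr B) ∨ (a = Sum.inr B ∧ b = Sum.inl u))
  symm := by
    constructor
    rintro a b ⟨u, B, hm, (⟨rfl, rfl⟩ | ⟨rfl, rfl⟩)⟩
    · exact ⟨u, B, hm, Or.inr ⟨rfl, rfl⟩⟩
    · exact ⟨u, B, hm, Or.inl ⟨rfl, rfl⟩⟩
  loopless := by
    constructor
    rintro a ⟨u, B, hm, (⟨rfl, h⟩ | ⟨rfl, h⟩)⟩ <;> simp at h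

/-! For `u ≠ s`, `u` dominates `w` exactly when `w` is unreachable from `s` in `G \ u`. If
`z ∉ {x, y}` dominates `x`, it therefore dominates `y` as well, because `y` reaches `x` in `G \ z`.
So if `x` dominates `y`, every other proper dominator of `y` dominates `x`, and `x = d(y)`. If
neither dominates the other, `x` and `y` have the same proper dominators, hence the same
immediate dominator. -/

open Relation

section Reachability

variable {α : Type*} {R : α → α → Prop} {a b u v : α}

lemma delV_delV_le : delV (delV R u) v ≤ delV R v := fun _ _ h => ⟨h.1.1, h.2⟩

lemma Relation.ReflTransGen.of_delV (h : ReflTransGen (delV R u) a b) : ReflTransGen R a b :=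
  ReflTransGen.mono (fun _ _ h => h.1) _ _ h

lemma Relation.ReflTransGen.ne_of_delV (h : ReflTransGen (delV R u) a b) (hbu : b ≠ u) :
    a ≠ u := by
  rcases h.cases_head with rfl | ⟨c, hac, -⟩
  · exact hbu
  · exact hac.2.1

lemma Relation.ReflTransGen.delV_or (h : ReflTransGen R a b) :
    ReflTransGen (delV R v) a b ∨ ReflTransGen R a v := by
  induction h with
  | refl => exact Or.inl .refl
  | @tail c d _ hcd ih =>
    rcases ih with hac | hav
    · by_cases hc : c = v
      · exact Or.inr (hc ▸ hac.of_delV)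
      by_cases hd : d = v
      · exact Or.inr (hd ▸ hac.of_delV.tail hcd)
      · exact Or.inl (hac.tail ⟨hcd, hc, hd⟩)
    · exact Or.inr hav

/-- Split a path at its last visit of `u` or `v`. -/
lemma Relation.ReflTransGen.delV_delV_or (h : ReflTransGen R a b) (huv : u ≠ v) (hbu : b ≠ u)
    (hbv : b ≠ v) :
    ReflTransGen (delV (delV R u) v) a b ∨ ReflTransGen (delV R u) v b ∨
      ReflTransGen (delV R v) u b := by
  induction h using ReflTransGen.head_induction_on with
  | refl => exact Or.inl .refl
  | @head c d hcd _ ih =>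
    rcases ih with hdb | hvb | hub
    · have hdv : d ≠ v := hdb.ne_of_delV hbv
      have hdu : d ≠ u := hdb.of_delV.ne_of_delV hbu
      by_cases hcu : c = u
      · subst hcu
        exact Or.inr (Or.inr (.head ⟨hcd, huv, hdv⟩
          (ReflTransGen.mono delV_delV_le _ _ hdb)))
      by_cases hcv : c = v
      · subst hcv
        exact Or.inr (Or.inl (.head ⟨hcd, hcu, hdu⟩ hdb.of_delV))
      · exact Or.inl (.head ⟨⟨hcd, hcu, hdu⟩, hcv, hdv⟩ hdb)
    · exact Or.inr (Or.inl hvb)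
    · exact Or.inr (Or.inr hub)

end Reachability

section Paths

variable {α : Type*} {R : α → α → Prop} {a b u : α} {l : List α}

lemma reflTransGen_iff_exists_isPathList : ReflTransGen R a b ↔ ∃ l, IsPathList R a b l := by
  constructor
  · intro h
    obtain ⟨l, hchain, hlast⟩ := List.exists_isChain_cons_of_relationReflTransGen h
    exact ⟨a :: l, hchain, rfl, by rw [List.getLast?_eq_some_getLast (List.cons_ne_nil _ _), hlast]⟩
  · rintro ⟨l, hchain, hhead, hlast⟩
    have hne : l ≠ [] := by rintro rfl; simp at hhead
    have := List.relationReflTransGen_of_exists_isChain l hchain hne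
    rwa [(List.head_eq_iff_head?_eq_some hne).mpr hhead, List.getLast_of_mem_getLast? hlast] at this

lemma List.IsChain.ne_of_delV : ∀ {l : List α}, l.IsChain (delV R u) → ∀ b ∈ l.tail, b ≠ u
  | _ :: _ :: _, .cons_cons hab hl, b, hb => by
    rcases List.mem_cons.mp hb with rfl | hb
    · exact hab.2.2
    · exact hl.ne_of_delV b hb

lemma isPathList_delV_iff (hau : a ≠ u) :
    IsPathList (delV R u) a b l ↔ IsPathList R a b l ∧ u ∉ l := by
  constructor
  · rintro ⟨hchain, hhead, hlast⟩
    refine ⟨⟨hchain.imp fun _ _ h => h.1, hhead, hlast⟩, fun hu => ?_⟩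
    obtain ⟨t, rfl⟩ : ∃ t, l = a :: t := by
      cases l <;> simp_all
    rcases List.mem_cons.mp hu with rfl | hu
    · exact hau rfl
    · exact hchain.ne_of_delV u hu rfl
  · rintro ⟨⟨hchain, hhead, hlast⟩, hu⟩
    refine ⟨hchain.imp_of_mem_imp fun x y hx hy hxy => ⟨hxy, ?_, ?_⟩, hhead, hlast⟩ <;>
      rintro rfl <;> contradiction

end Paths

section Dominance

variable {E : V → V → Prop} {s u v w : V}

lemma domOf_iff_not_reflTransGen_delV (hus : u ≠ s) :
    DomOf E s u w ↔ ¬ ReflTransGen (delV E u) s w := by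
  simp only [DomOf, reflTransGen_iff_exists_isPathList, isPathList_delV_iff hus.symm, not_exists,
    not_and, not_not]

lemma domOf_start : DomOf E s s w := fun _ hl => List.mem_of_mem_head? hl.2.1

lemma domOf_refl : DomOf E s w w := fun _ hl => List.mem_of_getLast? hl.2.2

lemma DomOf.of_reflTransGen_delV (h : DomOf E s u w) (hvw : ReflTransGen (delV E u) v w) :
    DomOf E s u v := by
  rcases eq_or_ne u s with rfl | hus
  · exact domOf_start
  rw [domOf_iff_not_reflTransGen_delV hus] at h ⊢
  exact fun hsv => h (hsv.trans hvw)

lemma DomOf.trans (huv : DomOf E s u v) (hvw : DomOf E s v w) : DomOf E s u w := by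
  rcases eq_or_ne u s with rfl | hus
  · exact domOf_start
  rw [domOf_iff_not_reflTransGen_delV hus] at huv ⊢
  rcases eq_or_ne v s with rfl | hvs
  · exact absurd .refl huv
  rw [domOf_iff_not_reflTransGen_delV hvs] at hvw
  intro hsw
  rcases hsw.delV_or (v := v) with hsw' | hsv
  · exact hvw (ReflTransGen.mono delV_delV_le _ _ hsw')
  · exact huv hsv

instance : IsTrans V (DomOf E s) := ⟨fun _ _ _ => DomOf.trans⟩

lemma DomOf.total (hw : ReflTransGen E s w) (hu : DomOf E s u w) (hv : DomOf E s v w)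
    (huw : u ≠ w) (hvw : v ≠ w) : DomOf E s u v ∨ DomOf E s v u := by
  rcases eq_or_ne u s with rfl | hus
  · exact Or.inl domOf_start
  rcases eq_or_ne v s with rfl | hvs
  · exact Or.inr domOf_start
  rcases eq_or_ne u v with rfl | huv
  · exact Or.inl domOf_refl
  rcases hw.delV_delV_or huv huw.symm hvw.symm with hsw | hvw' | huw'
  · exact absurd hsw.of_delV ((domOf_iff_not_reflTransGen_delV hus).mp hu)
  · exact Or.inl (hu.of_reflTransGen_delV hvw')
  · exact Or.inr (hv.of_reflTransGen_delV huw')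

lemma finite_setOf_domOf (hw : ReflTransGen E s w) : {u | DomOf E s u w}.Finite := by
  obtain ⟨l, hl⟩ := reflTransGen_iff_exists_isPathList.mp hw
  exact l.finite_toSet.subset fun _ hu => hu l hl

lemma exists_idomOf (hw : ReflTransGen E s w) (hws : w ≠ s) : ∃ d, IdomOf E s d w := by
  let D := {u | u ≠ w ∧ DomOf E s u w}
  have : Fintype D := ((finite_setOf_domOf hw).subset fun _ hu => hu.2).fintype
  have : Nonempty D := ⟨⟨s, hws.symm, domOf_start⟩⟩
  have hdir : Directed (DomOf E s) (Subtype.val : D → V) := fun a b =>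
    (DomOf.total hw a.2.2 b.2.2 a.2.1 b.2.1).elim (fun h => ⟨b, h, domOf_refl⟩)
      (fun h => ⟨a, domOf_refl, h⟩)
  obtain ⟨⟨d, hdw, hd⟩, hmax⟩ := hdir.finset_le Finset.univ
  exact ⟨d, hdw, hd, fun u huw hu => hmax ⟨u, huw, hu⟩ (Finset.mem_univ _)⟩

end Dominance

section VertexResilience

variable {E : V → V → Prop} {s u x y d : V}

lemma VRes.symm (h : VRes E x y) : VRes E y x :=
  ⟨h.1.symm, fun w hwy hwx => (h.2 w hwx hwy).symm⟩

lemma VRes.domOf_of_domOf (h : VRes E x y) (hux : u ≠ x) (huy : u ≠ y) (hu : DomOf E s u x) :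
    DomOf E s u y := by
  rcases eq_or_ne u s with rfl | hus
  · exact domOf_start
  rw [domOf_iff_not_reflTransGen_delV hus] at hu ⊢
  exact fun hsy => hu (hsy.trans (h.2 u hux huy).2)

lemma VRes.idomOf_of_domOf (h : VRes E x y) (hxy : DomOf E s x y) : IdomOf E s x y := by
  refine ⟨h.1, hxy, fun u huy hu => ?_⟩
  rcases eq_or_ne u x with rfl | hux
  · exact domOf_refl
  · exact h.symm.domOf_of_domOf huy hux hu

lemma VRes.idomOf_of_idomOf (h : VRes E x y) (hxy : ¬ DomOf E s x y) (hyx : ¬ DomOf E s y x)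
    (hd : IdomOf E s d y) : IdomOf E s d x := by
  have hdx : d ≠ x := by rintro rfl; exact hxy hd.2.1
  refine ⟨hdx, h.symm.domOf_of_domOf hd.1 hdx hd.2.1, fun u hux hu => ?_⟩
  have huy : u ≠ y := by rintro rfl; exact hyx hu
  exact hd.2.2 u huy (h.domOf_of_domOf hux huy hu)

end VertexResilience

theorem stmt9_general (E : V → V → Prop) (s : V) (hsc : StronglyConn E)
    (x y : V) (hvr : VRes E x y) :
    (∃ p, IdomOf E s p x ∧ IdomOf E s p y) ∨ IdomOf E s x y ∨ IdomOf E s y x := by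
  by_cases hxy : DomOf E s x y
  · exact Or.inr (Or.inl (hvr.idomOf_of_domOf hxy))
  by_cases hyx : DomOf E s y x
  · exact Or.inr (Or.inr (hvr.symm.idomOf_of_domOf hyx))
  have hys : y ≠ s := by rintro rfl; exact hyx domOf_start
  obtain ⟨d, hd⟩ := exists_idomOf (hsc s y) hys
  exact Or.inl ⟨d, hvr.idomOf_of_idomOf hxy hyx hd, hd⟩

/-- in a strongly connected digraph with start vertex `s`, any two
distinct vertex-resilient vertices `x,y` are siblings in the dominator tree `D(s)`
(they have a common immediate dominator), or one is the immediate dominator of the other. -/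
theorem stmt9 (E : V → V → Prop) (s : V) (hsc : StronglyConn E)
    (x y : V) (hxy : x ≠ y) (hvr : VRes E x y) :
    (∃ p, IdomOf E s p x ∧ IdomOf E s p y) ∨ IdomOf E s x y ∨ IdomOf E s y x :=
  stmt9_general E s hsc x y hvr
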